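/- Let (W_k^n)_{n≥1, 0≤k<2^n} be a family of independent standard normal random variables. Define N₁ = sup{ n ≥ 1 : |W_k^n| > 4√(n+1) for some 0 ≤ k < 2^n }, with the convention sup ∅ = 0. Then N₁ is almost surely finite and E[N₁] < ∞. -/

import Mathlib

open MeasureTheory ProbabilityTheory Filter
open scoped ENNReal NNReal

/-- The last level at which a wavelet coefficient record is broken:
`N₁ = sup { n ≥ 1 : |Wₖⁿ| > 4√(n+1) for some 0 ≤ k < 2ⁿ }` (an `ℝ≥0∞`-valued supremum,
equal to `0` if no record is ever broken). -/
noncomputable def recordLevel (W : ℕ → ℕ → ℝ) : ℝ≥0∞ :=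
  ⨆ (n : ℕ) (_ : 1 ≤ n ∧ ∃ k < 2 ^ n, 4 * Real.sqrt ((n : ℝ) + 1) < |W n k|), (n : ℝ≥0∞)

/-!
By the Chernoff bound for the standard Gaussian, `P(|W| ≥ 4√(n+1)) ≤ 2 e^{-8(n+1)}`, so by a
union bound the event `Aₙ` that level `n` breaks a record has probability at most
`2ⁿ · 2 e^{-8(n+1)} = (2e⁻⁸)ⁿ⁺¹`. Since `N₁ ≤ ∑ₙ n · 1_{Aₙ}`, its expectation is at most
`∑ₙ n (2e⁻⁸)ⁿ⁺¹ < ∞`, and a random variable with finite expectation is a.s. finite.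
-/

section Subgaussian

variable {Ω : Type*} [MeasurableSpace Ω] {μ : Measure Ω}

lemma hasSubgaussianMGF_of_map_eq_gaussianReal [IsProbabilityMeasure μ] {X : Ω → ℝ} {v : ℝ≥0}
    (hX : μ.map X = gaussianReal 0 v) : HasSubgaussianMGF X v μ where
  integrable_exp_mul t := mgf_pos_iff.1 (by rw [mgf_gaussianReal hX]; positivity)
  mgf_le t := by rw [mgf_gaussianReal hX]; simp

lemma ProbabilityTheory.HasSubgaussianMGF.measure_abs_ge_le [IsFiniteMeasure μ] {X : Ω → ℝ}
    {c : ℝ≥0} (h : HasSubgaussianMGF X c μ) {ε : ℝ} (hε : 0 ≤ ε) :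
    μ {ω | ε ≤ |X ω|} ≤ ENNReal.ofReal (2 * Real.exp (-ε ^ 2 / (2 * c))) := by
  have hsplit : {ω | ε ≤ |X ω|} = {ω | ε ≤ X ω} ∪ {ω | ε ≤ (-X) ω} := by
    ext ω
    simp [le_abs]
  rw [hsplit, two_mul, ENNReal.ofReal_add (by positivity) (by positivity)]
  refine (measure_union_le _ _).trans (add_le_add ?_ ?_) <;> rw [← ofReal_measureReal]
  · exact ENNReal.ofReal_le_ofReal (h.measure_ge_le hε)
  · exact ENNReal.ofReal_le_ofReal (h.neg.measure_ge_le hε)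

lemma measure_exists_abs_ge_le_of_hasSubgaussianMGF [IsFiniteMeasure μ] {ι : Type*}
    (s : Finset ι) {X : ι → Ω → ℝ} {c : ℝ≥0} (h : ∀ i ∈ s, HasSubgaussianMGF (X i) c μ)
    {ε : ℝ} (hε : 0 ≤ ε) :
    μ {ω | ∃ i ∈ s, ε ≤ |X i ω|} ≤ s.card * ENNReal.ofReal (2 * Real.exp (-ε ^ 2 / (2 * c))) :=
  calc μ {ω | ∃ i ∈ s, ε ≤ |X i ω|} = μ (⋃ i ∈ s, {ω | ε ≤ |X i ω|}) := by
        congr 1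
        ext ω
        simp
    _ ≤ ∑ i ∈ s, μ {ω | ε ≤ |X i ω|} := measure_biUnion_finset_le _ _
    _ ≤ ∑ _i ∈ s, ENNReal.ofReal (2 * Real.exp (-ε ^ 2 / (2 * c))) :=
        Finset.sum_le_sum fun i hi => (h i hi).measure_abs_ge_le hε
    _ = _ := by rw [Finset.sum_const, nsmul_eq_mul]

end Subgaussian

section LevelSupremum

variable {Ω : Type*} [MeasurableSpace Ω] (μ : Measure Ω) (A : ℕ → Set Ω)

lemma exists_measurable_iSup_mem_natCast_le :
    ∃ g : Ω → ℝ≥0∞, Measurable g ∧ (∀ ω, ⨆ (n : ℕ) (_ : ω ∈ A n), (n : ℝ≥0∞) ≤ g ω) ∧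
      ∫⁻ ω, g ω ∂μ = ∑' n : ℕ, n * μ (A n) := by
  have hmeas : ∀ n : ℕ,
      Measurable ((toMeasurable μ (A n)).indicator fun _ => (n : ℝ≥0∞)) := fun n =>
    measurable_const.indicator (measurableSet_toMeasurable _ _)
  refine ⟨fun ω => ∑' n : ℕ, (toMeasurable μ (A n)).indicator (fun _ => (n : ℝ≥0∞)) ω,
    Measurable.tsum hmeas, fun ω => iSup₂_le fun n hn => ?_, ?_⟩
  · calc (n : ℝ≥0∞) = (toMeasurable μ (A n)).indicator (fun _ => (n : ℝ≥0∞)) ω :=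
          (Set.indicator_of_mem (subset_toMeasurable μ _ hn) fun _ => (n : ℝ≥0∞)).symm
      _ ≤ _ := ENNReal.le_tsum n
  · rw [lintegral_tsum fun n => (hmeas n).aemeasurable]
    simp_rw [lintegral_indicator_const (measurableSet_toMeasurable _ _), measure_toMeasurable]

lemma ae_iSup_mem_natCast_lt_top_and_lintegral_lt_top (h : ∑' n : ℕ, n * μ (A n) ≠ ∞) :
    (∀ᵐ ω ∂μ, ⨆ (n : ℕ) (_ : ω ∈ A n), (n : ℝ≥0∞) < ∞) ∧
      ∫⁻ ω, ⨆ (n : ℕ) (_ : ω ∈ A n), (n : ℝ≥0∞) ∂μ < ∞ := by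
  obtain ⟨g, hg, hle, hint⟩ := exists_measurable_iSup_mem_natCast_le μ A
  have hg_lt : ∫⁻ ω, g ω ∂μ < ∞ := hint ▸ h.lt_top
  exact ⟨(ae_lt_top hg hg_lt.ne).mono fun ω hω => (hle ω).trans_lt hω,
    (lintegral_mono hle).trans_lt hg_lt⟩

end LevelSupremum

lemma tsum_natCast_mul_ofReal_pow_succ_ne_top {r : ℝ} (h0 : 0 ≤ r) (h1 : r < 1) :
    ∑' n : ℕ, (n : ℝ≥0∞) * ENNReal.ofReal (r ^ (n + 1)) ≠ ∞ := by
  have hs : Summable fun n : ℕ => r * (n * r ^ n) :=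
    (hasSum_coe_mul_geometric_of_norm_lt_one (by rwa [Real.norm_of_nonneg h0])).summable.mul_left r
  have hterm : ∀ n : ℕ,
      (n : ℝ≥0∞) * ENNReal.ofReal (r ^ (n + 1)) = ENNReal.ofReal (r * (n * r ^ n)) := by
    intro n
    rw [← ENNReal.ofReal_natCast, ← ENNReal.ofReal_mul (by positivity)]
    ring_nf
  simp_rw [hterm]
  rw [← ENNReal.ofReal_tsum_of_nonneg (fun n => by positivity) hs]
  exact ENNReal.ofReal_ne_top

lemma measure_record_at_level_le {Ω : Type*} [MeasurableSpace Ω] (P : Measure Ω)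
    [IsProbabilityMeasure P] (W : ℕ → ℕ → Ω → ℝ)
    (hGauss : ∀ n k : ℕ, 1 ≤ n → k < 2 ^ n → P.map (W n k) = gaussianReal 0 1) (n : ℕ) :
    P {ω | 1 ≤ n ∧ ∃ k < 2 ^ n, 4 * √((n : ℝ) + 1) < |W n k ω|} ≤
      ENNReal.ofReal ((2 * Real.exp (-8)) ^ (n + 1)) := by
  by_cases hn : 1 ≤ n
  swap
  · simp [hn]
  have hsub : {ω | 1 ≤ n ∧ ∃ k < 2 ^ n, 4 * √((n : ℝ) + 1) < |W n k ω|} ⊆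
      {ω | ∃ k ∈ Finset.range (2 ^ n), 4 * √((n : ℝ) + 1) ≤ |W n k ω|} := by
    rintro ω ⟨-, k, hk, hlt⟩
    exact ⟨k, Finset.mem_range.2 hk, hlt.le⟩
  have hexp : (2 : ℝ) ^ n * (2 * Real.exp (-(4 * √((n : ℝ) + 1)) ^ 2 / (2 * (1 : ℝ≥0)))) =
      (2 * Real.exp (-8)) ^ (n + 1) := by
    rw [mul_pow, Real.sq_sqrt (by positivity), mul_pow, ← Real.exp_nat_mul]
    push_cast
    ring_nf
  calc _ ≤ _ := measure_mono hsub
    _ ≤ _ := measure_exists_abs_ge_le_of_hasSubgaussianMGF _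
        (fun k hk => hasSubgaussianMGF_of_map_eq_gaussianReal
          (hGauss n k hn (Finset.mem_range.1 hk))) (by positivity)
    _ = _ := by
        rw [← hexp, ENNReal.ofReal_mul (by positivity), Finset.card_range]
        simp

theorem record_level_integrable
    {Ω : Type*} [MeasurableSpace Ω] (P : Measure Ω) [IsProbabilityMeasure P]
    (W : ℕ → ℕ → Ω → ℝ)
    (hGauss : ∀ n k : ℕ, 1 ≤ n → k < 2 ^ n → P.map (W n k) = gaussianReal 0 1) :
    (∀ᵐ ω ∂P, recordLevel (fun n k => W n k ω) < ⊤) ∧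
    ∫⁻ ω, recordLevel (fun n k => W n k ω) ∂P < ⊤ := by
  have hr : 2 * Real.exp (-8) < 1 := by
    have := Real.add_one_le_exp 8
    rw [Real.exp_neg, ← div_eq_mul_inv, div_lt_one (Real.exp_pos 8)]
    linarith
  refine ae_iSup_mem_natCast_lt_top_and_lintegral_lt_top P
    (fun n => {ω | 1 ≤ n ∧ ∃ k < 2 ^ n, 4 * √((n : ℝ) + 1) < |W n k ω|})
    (ne_top_of_le_ne_top (tsum_natCast_mul_ofReal_pow_succ_ne_top (by positivity) hr) ?_)
  gcongr with n
  exact measure_record_at_level_le P W hGauss n
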